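/- Let u_K be the numerical schemes defined by the truncated explicit formula (Benjamin–Ono case): û_K(t,k) = ⟨u^k, 1⟩ for 0 ≤ k < K with u⁰ = Π_{n(0)}u₀ and u^k = e^{it(I+2L_{n(k)})}S* u^{k-1}, extended by conjugate symmetry to negative frequencies and zero for |k| ≥ K. If n(0) ≥ 1, then ∫_T u_K(t,x) dx = ∫_T u₀(x) dx for all t, and ‖u_K(t)‖_{L²} ≤ ‖u₀‖_{L²}. -/

import Mathlib

/-!
Each step of the scheme strips off the zeroth Fourier coefficient with `S*` and then applies a
unitary, so `‖w (k+1)‖² = ‖w k‖² - |ŵ_k(0)|²`. Telescoping, the coefficients `ĉ(k) = ŵ_k(0)`,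
`0 ≤ k < K`, carry at most the mass `‖Π_{n₀}u₀‖² ≤ ∑_{k ≥ 0} |û₀(k)|²`. Both `|ĉ|²` and `|û₀|²`
are even, and for an even summable `g` on `ℤ` one has `∑ g + g 0 = 2 ∑_{k ≥ 0} g k`; since
`ĉ(0) = û₀(0)` the bound on the nonnegative frequencies doubles to the `ℓ²(ℤ)` bound.
-/

open scoped ComplexConjugate ENNReal

noncomputable section

/-- The Hardy space `L²₊`, realized on the Fourier side as `ℓ²(ℕ)`. -/
abbrev Hp : Type := lp (fun _ : ℕ => ℂ) 2

/-- The left shift `S* = Π(e^{-ix}·)` on the Hardy space: `(S*f)^(k) = f̂(k+1)`. -/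
def shiftStar (f : Hp) : Hp :=
  ⟨fun k => f (k + 1), by
    have h : Summable fun k : ℕ => ‖f k‖ ^ (2 : ℝ≥0∞).toReal :=
      (memℓp_gen_iff (by norm_num)).mp (lp.memℓp f)
    exact memℓp_gen (h.comp_injective (add_left_injective 1))⟩

lemma Function.Even.tsum_int_add_apply_zero {f : ℤ → ℝ} (hf : f.Even) (hs : Summable f) :
    ∑' n : ℤ, f n + f 0 = 2 * ∑' n : ℕ, f n := by
  rw [← tsum_nat_add_neg hs, ← tsum_mul_left]
  simp only [hf _, two_mul]

namespace lp

variable {ι : Type*} {E : ι → Type*} [∀ i, NormedAddCommGroup (E i)]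

lemma hasSum_norm_sq (f : lp E 2) : HasSum (fun i => ‖f i‖ ^ 2) (‖f‖ ^ 2) := by
  simpa using lp.hasSum_norm (p := 2) (by norm_num) f

lemma norm_sq_le_tsum_of_norm_le {f : lp E 2} {g : ∀ i, E i} (hfg : ∀ i, ‖f i‖ ≤ ‖g i‖)
    (hg : Summable fun i => ‖g i‖ ^ 2) : ‖f‖ ^ 2 ≤ ∑' i, ‖g i‖ ^ 2 := by
  rw [← (hasSum_norm_sq f).tsum_eq]
  exact (hasSum_norm_sq f).summable.tsum_le_tsum
    (fun i => pow_le_pow_left₀ (norm_nonneg _) (hfg i) 2) hg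

end lp

namespace Hp

lemma norm_sq_shiftStar (f : Hp) : ‖shiftStar f‖ ^ 2 = ‖f‖ ^ 2 - ‖f 0‖ ^ 2 := by
  have h := (hasSum_nat_add_iff' 1).mpr (lp.hasSum_norm_sq f)
  simp only [Finset.sum_range_one] at h
  exact (lp.hasSum_norm_sq (shiftStar f)).unique h

lemma sum_range_norm_sq_apply_zero_add_norm_sq {w : ℕ → Hp}
    (hw : ∀ k, ‖w (k + 1)‖ = ‖shiftStar (w k)‖) (m : ℕ) :
    ∑ k ∈ Finset.range m, ‖w k 0‖ ^ 2 + ‖w m‖ ^ 2 = ‖w 0‖ ^ 2 := by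
  induction m with
  | zero => simp
  | succ m ih => rw [Finset.sum_range_succ, hw, norm_sq_shiftStar, ← ih]; ring

lemma sum_range_norm_sq_apply_zero_le {w : ℕ → Hp}
    (hw : ∀ k, ‖w (k + 1)‖ = ‖shiftStar (w k)‖) (m : ℕ) :
    ∑ k ∈ Finset.range m, ‖w k 0‖ ^ 2 ≤ ‖w 0‖ ^ 2 := by
  linarith [sum_range_norm_sq_apply_zero_add_norm_sq hw m, sq_nonneg ‖w m‖]

end Hp

section ConjExtension

variable {K : ℕ} {a : ℕ → ℂ} {c : ℤ → ℂ}

lemma norm_conjExtension (hc : ∀ k : ℤ, c k =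
      if 0 ≤ k ∧ k < (K : ℤ) then a k.toNat
      else if -(K : ℤ) < k ∧ k < 0 then conj (a (-k).toNat)
      else 0) (k : ℤ) :
    ‖c k‖ = if k.natAbs < K then ‖a k.natAbs‖ else 0 := by
  rw [hc k]
  rcases le_or_gt 0 k with hk | hk
  · have habs : k.toNat = k.natAbs := by omega
    by_cases hK : k.natAbs < K
    · rw [if_pos (by omega), if_pos hK, habs]
    · rw [if_neg (by omega), if_neg (by omega), if_neg hK, norm_zero]
  · have habs : (-k).toNat = k.natAbs := by omega
    by_cases hK : k.natAbs < K
    · rw [if_neg (by omega), if_pos (by omega), if_pos hK, habs, RCLike.norm_conj]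
    · rw [if_neg (by omega), if_neg (by omega), if_neg hK, norm_zero]

lemma tsum_norm_sq_conjExtension_add (hc : ∀ k : ℤ, c k =
      if 0 ≤ k ∧ k < (K : ℤ) then a k.toNat
      else if -(K : ℤ) < k ∧ k < 0 then conj (a (-k).toNat)
      else 0) :
    ∑' k : ℤ, ‖c k‖ ^ 2 + ‖c 0‖ ^ 2 = 2 * ∑ k ∈ Finset.range K, ‖a k‖ ^ 2 := by
  have hnorm := norm_conjExtension hc
  have heven : (fun k : ℤ => ‖c k‖ ^ 2).Even := fun k => by simp only [hnorm, Int.natAbs_neg]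
  have hsupp : ∀ k ∉ Finset.Ioo (-(K : ℤ)) K, ‖c k‖ ^ 2 = 0 := fun k hk => by
    rw [hnorm, if_neg (by simp only [Finset.mem_Ioo] at hk; omega)]
    norm_num
  rw [heven.tsum_int_add_apply_zero (summable_of_ne_finset_zero hsupp),
    tsum_eq_sum (s := Finset.range K) fun n hn => by
      rw [hnorm, if_neg (by simpa using hn)]; norm_num]
  congr 1
  exact Finset.sum_congr rfl fun n hn => by
    rw [hnorm, if_pos (by simpa using hn), Int.natAbs_natCast]

end ConjExtension

theorem stmt19 (u₀ : ℤ → ℂ) (hu₀ : Summable fun k : ℤ => ‖u₀ k‖ ^ 2)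
    (hreal : ∀ k : ℤ, u₀ (-k) = conj (u₀ k))
    (K : ℕ) (hK : 1 ≤ K) (n₀ : ℕ) (hn₀ : 1 ≤ n₀)
    (V : ℕ → Hp ≃ₗᵢ[ℂ] Hp) (w : ℕ → Hp)
    (hw0 : ∀ j : ℕ, (w 0 : ℕ → ℂ) j = if j < n₀ then u₀ (j : ℤ) else 0)
    (hrec : ∀ k : ℕ, 1 ≤ k → w k = V k (shiftStar (w (k - 1))))
    (c : ℤ → ℂ)
    (hc : ∀ k : ℤ, c k =
      if 0 ≤ k ∧ k < (K : ℤ) then (w k.toNat : ℕ → ℂ) 0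
      else if -(K : ℤ) < k ∧ k < 0 then conj ((w (-k).toNat : ℕ → ℂ) 0)
      else 0) :
    c 0 = u₀ 0 ∧ ∑' k : ℤ, ‖c k‖ ^ 2 ≤ ∑' k : ℤ, ‖u₀ k‖ ^ 2 := by
  have hc0 : c 0 = u₀ 0 := by
    rw [hc 0, if_pos (by omega), Int.toNat_zero, hw0, if_pos (by omega), Nat.cast_zero]
  refine ⟨hc0, ?_⟩
  have hstep : ∀ k, ‖w (k + 1)‖ = ‖shiftStar (w k)‖ := fun k => by
    rw [hrec (k + 1) (by omega), Nat.add_sub_cancel, LinearIsometryEquiv.norm_map]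
  have hseed : ‖w 0‖ ^ 2 ≤ ∑' n : ℕ, ‖u₀ n‖ ^ 2 :=
    lp.norm_sq_le_tsum_of_norm_le (fun j => by rw [hw0]; split_ifs <;> simp)
      (hu₀.comp_injective Nat.cast_injective)
  have hu₀_even : (fun k : ℤ => ‖u₀ k‖ ^ 2).Even := fun k => by
    simp only [hreal, RCLike.norm_conj]
  have hc_sum := tsum_norm_sq_conjExtension_add (a := fun k => w k 0) hc
  have hu₀_sum := hu₀_even.tsum_int_add_apply_zero hu₀
  have hcoeff := Hp.sum_range_norm_sq_apply_zero_le hstep K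
  rw [hc0] at hc_sum
  linarith
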